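/- Consider an ALG-schedule and a reference time t ≥ 0. Let j ∈ Cl(t) and k ∈ N(t), and suppose (j,k) is an E_N-edge of the borrow graph. Then y_k(t) ≤ y_j(s_j). -/

import Mathlib

open MeasureTheory Set

open scoped Classical

noncomputable section

variable {J : Type*}

/-- Total work done on job `j` by time `u` under the schedule `σ`. -/
def workDone (σ : ℝ → J → ℝ) (j : J) (u : ℝ) : ℝ := ∫ v in (0:ℝ)..u, σ v j

/-- Remaining processing time of job `j` at time `u`. -/
def remT (p : J → ℝ) (σ : ℝ → J → ℝ) (j : J) (u : ℝ) : ℝ := p j - workDone σ j u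

/-- Completion time of job `j`: the least `u` with `workDone σ j u = p j`,
    and `⊤` if the job never completes. -/
def cTime (p : J → ℝ) (σ : ℝ → J → ℝ) (j : J) : EReal :=
  sInf ((fun v : ℝ => (v : EReal)) '' {v : ℝ | workDone σ j v = p j})

/-- Job `j` is available at time `u`: released and not yet completed. -/
def availAt (r p : J → ℝ) (σ : ℝ → J → ℝ) (u : ℝ) (j : J) : Prop :=
  r j ≤ u ∧ (u : EReal) < cTime p σ j

/-- Job `j` is processed at time `u`. -/
def procAt (σ : ℝ → J → ℝ) (u : ℝ) (j : J) : Prop := 0 < σ u j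

/-- Job `j` is non-clairvoyant at time `u`. -/
def ncAt (r p : J → ℝ) (α : ℝ) (σ : ℝ → J → ℝ) (u : ℝ) (j : J) : Prop :=
  availAt r p σ u j ∧ workDone σ j u ≤ α * p j

/-- Job `j` is clairvoyant at time `u`. -/
def clAt (r p : J → ℝ) (α : ℝ) (σ : ℝ → J → ℝ) (u : ℝ) (j : J) : Prop :=
  availAt r p σ u j ∧ α * p j < workDone σ j u

/-- The time at which job `j` emits its signal: the least `u` with
    `workDone σ j u = α * p j`. -/
def emitT (p : J → ℝ) (α : ℝ) (σ : ℝ → J → ℝ) (j : J) : ℝ :=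
  sInf {u : ℝ | workDone σ j u = α * p j}

/-- Data of an instance: nonnegative release dates, positive processing times
    and `α ∈ (0,1)`. -/
structure IsInstance (r p : J → ℝ) (α : ℝ) : Prop where
  r_nonneg : ∀ j, 0 ≤ r j
  p_pos : ∀ j, 0 < p j
  alpha_mem : α ∈ Set.Ioo (0 : ℝ) 1

/-- `σ` is a (feasible, preemptive, single machine) schedule. -/
structure IsSchedule [Fintype J] (r p : J → ℝ) (σ : ℝ → J → ℝ) : Prop where
  meas : ∀ j, Measurable fun u => σ u j
  nonneg : ∀ u j, 0 ≤ σ u j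
  sum_le_one : ∀ u, ∑ j, σ u j ≤ 1
  zero_before_release : ∀ u j, u < r j → σ u j = 0
  workDone_le : ∀ u j, workDone σ j u ≤ p j

/-- A schedule is non-idling if it uses the full machine capacity whenever
    some job is available. -/
def NonIdling [Fintype J] (r p : J → ℝ) (σ : ℝ → J → ℝ) : Prop :=
  ∀ u, (∃ j, availAt r p σ u j) → ∑ j, σ u j = 1

/-- The SRPT condition at time `u`: `Cl(u) ≠ ∅` and
    `min_{j ∈ Cl(u)} p_j(u) ≤ ((1-α)/α) · min_{j ∈ N(u)} y_j(u)`
    (the minimum over the empty set being `+∞`). -/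
def SrptCond (r p : J → ℝ) (α : ℝ) (σ : ℝ → J → ℝ) (u : ℝ) : Prop :=
  ∃ k, clAt r p α σ u k ∧
    ∀ j, ncAt r p α σ u j → remT p σ k u ≤ ((1 - α) / α) * workDone σ j u

/-- `k` is a clairvoyant job of minimal remaining processing time at `u`,
    emitting last among those. -/
def IsSrptChoice (r p : J → ℝ) (α : ℝ) (σ : ℝ → J → ℝ) (u : ℝ) (k : J) : Prop :=
  clAt r p α σ u k ∧
    (∀ j, clAt r p α σ u j → remT p σ k u ≤ remT p σ j u) ∧
    (∀ j, clAt r p α σ u j → remT p σ j u = remT p σ k u →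
      emitT p α σ j ≤ emitT p α σ k)

/-- `j` is a non-clairvoyant job with minimal progress at time `u`. -/
def IsMinNc (r p : J → ℝ) (α : ℝ) (σ : ℝ → J → ℝ) (u : ℝ) (j : J) : Prop :=
  ncAt r p α σ u j ∧ ∀ j', ncAt r p α σ u j' → workDone σ j u ≤ workDone σ j' u

/-- `σ` is an ALG-schedule: non-idling, and at any time with available jobs it
    either runs a single clairvoyant job of shortest remaining processing time
    (breaking ties by latest emission) when the SRPT condition holds, or it runs
    exactly the non-clairvoyant jobs of minimal progress at equal rates. -/
structure IsALG [Fintype J] (r p : J → ℝ) (α : ℝ) (σ : ℝ → J → ℝ) : Prop where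
  sched : IsSchedule r p σ
  nonidling : NonIdling r p σ
  srpt_branch : ∀ u, (∃ j, availAt r p σ u j) → SrptCond r p α σ u →
    ∃ k, IsSrptChoice r p α σ u k ∧ ∀ j, j ≠ k → σ u j = 0
  setf_branch : ∀ u, (∃ j, availAt r p σ u j) → ¬ SrptCond r p α σ u →
    (∀ j, procAt σ u j → IsMinNc r p α σ u j) ∧
    (∀ j j', IsMinNc r p α σ u j → IsMinNc r p α σ u j' → σ u j = σ u j')

/-- Right endpoint `min (C_j, t)` of the lifetime of `j` w.r.t. reference time `t`. -/
def lifeEnd (p : J → ℝ) (σ : ℝ → J → ℝ) (t : ℝ) (j : J) : ℝ :=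
  (min (cTime p σ j) (t : EReal)).toReal

/-- The lifetime `I_j = [r j, min (C_j, t)]` of job `j`. -/
def lifetime (r p : J → ℝ) (σ : ℝ → J → ℝ) (t : ℝ) (j : J) : Set ℝ :=
  Set.Icc (r j) (lifeEnd p σ t j)

/-- `E_N`-edge of the borrow graph: `i` is processed at some time of `I_j`
    while being non-clairvoyant. -/
def ENedge (r p : J → ℝ) (α : ℝ) (σ : ℝ → J → ℝ) (t : ℝ) (j i : J) : Prop :=
  ∃ u ∈ lifetime r p σ t j, procAt σ u i ∧ ncAt r p α σ u i

/-- `E_C`-edge of the borrow graph: `i` is processed at some time of `I_j`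
    while being clairvoyant. -/
def ECedge (r p : J → ℝ) (α : ℝ) (σ : ℝ → J → ℝ) (t : ℝ) (j i : J) : Prop :=
  ∃ u ∈ lifetime r p σ t j, procAt σ u i ∧ clAt r p α σ u i

/-- Edge of the borrow graph `G_B`. -/
def borrowEdge (r p : J → ℝ) (α : ℝ) (σ : ℝ → J → ℝ) (t : ℝ) (j i : J) : Prop :=
  ENedge r p α σ t j i ∨ ECedge r p α σ t j i

/-- `reaches j i` iff `i ∈ R_j`, i.e. `i` is reachable from `j` in the borrow
    graph (`j` itself included). -/
def reaches (r p : J → ℝ) (α : ℝ) (σ : ℝ → J → ℝ) (t : ℝ) : J → J → Prop :=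
  Relation.ReflTransGen (borrowEdge r p α σ t)

/-- Truncated progress `ȳ_j = min (y_j(t), α p_j)`. -/
def truncY (p : J → ℝ) (α : ℝ) (σ : ℝ → J → ℝ) (t : ℝ) (j : J) : ℝ :=
  min (workDone σ j t) (α * p j)

end

/-!
At a time `w ∈ I_j` when `k` is processed while non-clairvoyant, the SRPT condition fails, so `k`
has least progress among the non-clairvoyant jobs. If `j` is non-clairvoyant this gives
`y_k(w) ≤ y_j(w) ≤ α p_j`; if `j` is clairvoyant, the failure of the SRPT condition gives
`((1-α)/α) y_k(w) < p_j(w) < (1-α) p_j`. So `y_k ≤ α p_j` at every time of `I_j` at which `y_k`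
grows, hence also at `t`, and `α p_j = y_j(s_j)`.
-/

theorem intervalIntegral_le_of_ne_zero_imp_le {f : ℝ → ℝ}
    (hf : ∀ x y, IntervalIntegrable f volume x y) {x₀ a b c : ℝ} (hab : a ≤ b)
    (ha : ∫ x in x₀..a, f x ≤ c) (hgrow : ∀ w ∈ Ioc a b, f w ≠ 0 → ∫ x in x₀..w, f x ≤ c) :
    ∫ x in x₀..b, f x ≤ c := by
  set F := fun w => ∫ x in x₀..w, f x
  have hS : IsCompact {w ∈ Icc a b | F w ≤ c} :=
    isCompact_Icc.inter_right
      (isClosed_le (intervalIntegral.continuous_primitive hf x₀) continuous_const)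
  obtain ⟨v, ⟨⟨hav, hvb⟩, hv⟩, hvmax⟩ := hS.exists_isGreatest ⟨a, ⟨le_rfl, hab⟩, ha⟩
  have hzero : EqOn f 0 (Ioc v b) := fun w hw => by
    by_contra hne
    exact not_le.mpr hw.1
      (hvmax ⟨⟨hav.trans hw.1.le, hw.2⟩, hgrow w ⟨hav.trans_lt hw.1, hw.2⟩ hne⟩)
  have hvb_zero : ∫ x in v..b, f x = 0 := by
    rw [intervalIntegral.integral_of_le hvb, setIntegral_congr_fun measurableSet_Ioc hzero]
    simp
  calc F b = F v + ∫ x in v..b, f x :=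
        (intervalIntegral.integral_add_adjacent_intervals (hf _ _) (hf _ _)).symm
    _ ≤ c := by rwa [hvb_zero, add_zero]

section Schedule

variable {J : Type*} {r p : J → ℝ} {α : ℝ} {σ : ℝ → J → ℝ}

theorem availAt_of_le {t w : ℝ} {j : J} (h : availAt r p σ t j) (hr : r j ≤ w) (hw : w ≤ t) :
    availAt r p σ w j :=
  ⟨hr, (EReal.coe_le_coe_iff.mpr hw).trans_lt h.2⟩

variable [Fintype J]

namespace IsSchedule

theorem le_one (hs : IsSchedule r p σ) (u : ℝ) (j : J) : σ u j ≤ 1 :=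
  (Finset.single_le_sum (fun i _ => hs.nonneg u i) (Finset.mem_univ j)).trans (hs.sum_le_one u)

theorem intervalIntegrable (hs : IsSchedule r p σ) (j : J) (a b : ℝ) :
    IntervalIntegrable (fun u => σ u j) volume a b := by
  refine IntervalIntegrable.mono_fun' (g := fun _ => (1 : ℝ)) intervalIntegrable_const
    (hs.meas j).aestronglyMeasurable (Filter.Eventually.of_forall fun u => ?_)
  change ‖σ u j‖ ≤ 1
  rw [Real.norm_eq_abs, abs_of_nonneg (hs.nonneg u j)]
  exact hs.le_one u j

theorem continuous_workDone (hs : IsSchedule r p σ) (j : J) : Continuous (workDone σ j) :=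
  intervalIntegral.continuous_primitive (hs.intervalIntegrable j) 0

theorem monotone_workDone (hs : IsSchedule r p σ) (j : J) : Monotone (workDone σ j) :=
  fun a b hab => by
    simp only [workDone]
    rw [← intervalIntegral.integral_add_adjacent_intervals (hs.intervalIntegrable j 0 a)
      (hs.intervalIntegrable j a b)]
    exact le_add_of_nonneg_right
      (intervalIntegral.integral_nonneg hab fun u _ => hs.nonneg u j)

theorem workDone_emitT (hs : IsSchedule r p σ) {j : J} {t : ℝ} (hpos : 0 < α * p j)
    (ht : α * p j ≤ workDone σ j t) : workDone σ j (emitT p α σ j) = α * p j := by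
  have h0 : workDone σ j 0 = 0 := intervalIntegral.integral_same
  have hmono := hs.monotone_workDone j
  have hlevel_pos : ∀ u, workDone σ j u = α * p j → 0 < u := fun u hu => by
    by_contra! hu0
    linarith [hmono hu0]
  have ht0 : 0 ≤ t := by
    by_contra! h
    linarith [hmono h.le]
  obtain ⟨u, -, hu⟩ := intermediate_value_Icc ht0 (hs.continuous_workDone j).continuousOn
    ⟨h0.symm ▸ hpos.le, ht⟩
  exact (isClosed_eq (hs.continuous_workDone j) continuous_const).csInf_mem ⟨u, hu⟩
    ⟨0, fun v hv => (hlevel_pos v hv).le⟩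

theorem release_le_of_procAt (hs : IsSchedule r p σ) {u : ℝ} {j : J} (h : procAt σ u j) :
    r j ≤ u :=
  not_lt.mp fun hu => h.ne' (hs.zero_before_release u j hu)

end IsSchedule

theorem ncAt_of_procAt_of_le (hs : IsSchedule r p σ) {t w : ℝ} {k : J}
    (hk : ncAt r p α σ t k) (hproc : procAt σ w k) (hw : w ≤ t) : ncAt r p α σ w k :=
  ⟨availAt_of_le hk.1 (hs.release_le_of_procAt hproc) hw,
    (hs.monotone_workDone k hw).trans hk.2⟩

namespace IsALG

theorem not_srptCond_of_procAt_ncAt (halg : IsALG r p α σ) {w : ℝ} {k : J}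
    (hproc : procAt σ w k) (hk : ncAt r p α σ w k) : ¬ SrptCond r p α σ w := by
  intro hS
  obtain ⟨k', hk', hzero⟩ := halg.srpt_branch w ⟨k, hk.1⟩ hS
  obtain rfl : k = k' := by_contra fun hne => hproc.ne' (hzero k hne)
  exact not_lt.mpr hk.2 hk'.1.2

theorem workDone_le_of_procAt_ncAt (hinst : IsInstance r p α) (halg : IsALG r p α σ)
    {w : ℝ} {j k : J} (hj : availAt r p σ w j) (hproc : procAt σ w k)
    (hk : ncAt r p α σ w k) : workDone σ k w ≤ α * p j := by
  have hS := halg.not_srptCond_of_procAt_ncAt hproc hk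
  have hmin := ((halg.setf_branch w ⟨k, hk.1⟩ hS).1 k hproc).2
  rcases le_or_gt (workDone σ j w) (α * p j) with hjnc | hjcl
  · exact (hmin j ⟨hj, hjnc⟩).trans hjnc
  · simp only [SrptCond, not_exists, not_and, not_forall, not_le] at hS
    obtain ⟨m, hm, hlt⟩ := hS j ⟨hj, hjcl⟩
    obtain ⟨hα0, hα1⟩ := hinst.alpha_mem
    have hcoef : 0 < (1 - α) / α := div_pos (by linarith) hα0
    have hrem : remT p σ j w < (1 - α) * p j := by
      unfold remT
      linarith
    have hscale : (1 - α) / α * (α * p j) = (1 - α) * p j := by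
      field_simp
    refine (lt_of_mul_lt_mul_left ?_ hcoef.le).le
    calc (1 - α) / α * workDone σ k w ≤ (1 - α) / α * workDone σ m w :=
          mul_le_mul_of_nonneg_left (hmin m hm) hcoef.le
      _ < remT p σ j w := hlt
      _ < (1 - α) / α * (α * p j) := hscale ▸ hrem

end IsALG

end Schedule

theorem stmt13_general {J : Type*} [Fintype J] {r p : J → ℝ} {α : ℝ} {σ : ℝ → J → ℝ}
    (hinst : IsInstance r p α) (halg : IsALG r p α σ) (t : ℝ)
    (j k : J) (hj : clAt r p α σ t j) (hk : ncAt r p α σ t k)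
    (he : ENedge r p α σ t j k) :
    workDone σ k t ≤ workDone σ j (emitT p α σ j) := by
  have hs := halg.sched
  have hαp : 0 < α * p j := mul_pos hinst.alpha_mem.1 (hinst.p_pos j)
  rw [hs.workDone_emitT hαp hj.2.le]
  obtain ⟨u, ⟨hru, hut⟩, hproc, -⟩ := he
  rw [lifeEnd, min_eq_right hj.1.2.le, EReal.toReal_coe] at hut
  have hbound : ∀ w ∈ Icc u t, procAt σ w k → workDone σ k w ≤ α * p j := fun w hw hw_proc =>
    halg.workDone_le_of_procAt_ncAt hinst (availAt_of_le hj.1 (hru.trans hw.1) hw.2) hw_proc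
      (ncAt_of_procAt_of_le hs hk hw_proc hw.2)
  refine intervalIntegral_le_of_ne_zero_imp_le (hs.intervalIntegrable k) hut
    (hbound u ⟨le_rfl, hut⟩ hproc) fun w hw hne => hbound w (Ioc_subset_Icc_self hw) ?_
  exact lt_of_le_of_ne (hs.nonneg w k) (Ne.symm hne)

/-- If `j ∈ Cl(t)`, `k ∈ N(t)` and `(j,k)` is an `E_N`-edge
of the borrow graph, then `y_k(t) ≤ y_j(s_j)`. -/
theorem stmt13 {J : Type*} [Fintype J] {r p : J → ℝ} {α : ℝ} {σ : ℝ → J → ℝ}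
    (hinst : IsInstance r p α) (halg : IsALG r p α σ) (t : ℝ) (ht : 0 ≤ t)
    (j k : J) (hj : clAt r p α σ t j) (hk : ncAt r p α σ t k)
    (he : ENedge r p α σ t j k) :
    workDone σ k t ≤ workDone σ j (emitT p α σ j) :=
  stmt13_general hinst halg t j k hj hk he
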